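/- arXiv:1804.06586 — 5 statements merged into one kernel-verified Lean document; each statement's English description precedes it below -/
import Mathlib

section
/- For the matrix ODE Ṗ = −μ₀(1 − κ₀‖P⁻¹‖) P + YᵀY with P(0) ≥ κ₀ I, the solution satisfies P(t) ≥ κ₀ I for all t ≥ 0 (so that ‖P(t)⁻¹‖ ≤ 1/κ₀ and μ(t) ≥ 0). -/
/-!
Write `f_y(t) = yᵀ P(t) y`. While `P` is symmetric positive definite, Cauchy–Schwarz for the form
of `P`, applied to `y` and `P⁻¹ y`, gives `‖y‖² ≤ ‖P⁻¹‖ f_y`; inserted into the equation this yields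
the linear differential inequality `f_y' ≥ μ₀ (κ₀ ‖y‖² - f_y)`, so `f_y - κ₀ ‖y‖²` stays
nonnegative. Symmetry is propagated by Grönwall: `Pᵀ - P` solves `D' = -μ D`, whose coefficient is
bounded as long as `P` stays uniformly coercive. The two facts bootstrap each other along `[0, ∞)`
by continuous induction.
-/

open Matrix Set Filter Topology
open scoped Matrix.Norms.L2Operator

namespace Matrix

variable {ι : Type*} [Fintype ι]

def CoerciveWith (c : ℝ) (A : Matrix ι ι ℝ) : Prop :=
  ∀ x : ι → ℝ, c * (x ⬝ᵥ x) ≤ x ⬝ᵥ A *ᵥ x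

lemma dotProduct_self_nonneg (x : ι → ℝ) : 0 ≤ x ⬝ᵥ x :=
  Finset.sum_nonneg fun i _ => mul_self_nonneg (x i)

lemma dotProduct_self_pos {x : ι → ℝ} (hx : x ≠ 0) : 0 < x ⬝ᵥ x :=
  (dotProduct_self_nonneg x).lt_of_ne' (dotProduct_self_eq_zero.not.2 hx)

lemma dotProduct_self_eq_norm_sq (x : ι → ℝ) :
    x ⬝ᵥ x = ‖(WithLp.toLp 2 x : EuclideanSpace ℝ ι)‖ ^ 2 := by
  rw [← real_inner_self_eq_norm_sq, EuclideanSpace.inner_toLp_toLp, star_trivial]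

lemma dotProduct_mulVec_le_norm_mul_dotProduct_self [DecidableEq ι] (A : Matrix ι ι ℝ)
    (x : ι → ℝ) : x ⬝ᵥ A *ᵥ x ≤ ‖A‖ * (x ⬝ᵥ x) := by
  set v : EuclideanSpace ℝ ι := WithLp.toLp 2 x
  have h := (real_inner_le_norm v (toEuclideanCLM (𝕜 := ℝ) A v)).trans
    (mul_le_mul_of_nonneg_left ((toEuclideanCLM (𝕜 := ℝ) A).le_opNorm v) (norm_nonneg v))
  rw [inner_toEuclideanCLM, l2_opNorm_toEuclideanCLM] at h
  rw [dotProduct_self_eq_norm_sq]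
  linarith

lemma isClosed_setOf_coerciveWith (c : ℝ) : IsClosed {A : Matrix ι ι ℝ | CoerciveWith c A} := by
  simp only [CoerciveWith, ofPred_forall]
  exact isClosed_iInter fun x => isClosed_le continuous_const (by fun_prop)

namespace CoerciveWith

variable {c : ℝ} {A : Matrix ι ι ℝ}

lemma mono {c' : ℝ} (h : CoerciveWith c A) (hc : c' ≤ c) : CoerciveWith c' A := fun x =>
  (mul_le_mul_of_nonneg_right hc (dotProduct_self_nonneg x)).trans (h x)

lemma eventually_nhds [DecidableEq ι] {c' : ℝ} (h : CoerciveWith c A) (hc : c' < c) :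
    ∀ᶠ B in 𝓝 A, CoerciveWith c' B := by
  filter_upwards [Metric.ball_mem_nhds A (sub_pos.2 hc)] with B hB x
  rw [Metric.mem_ball, dist_comm, dist_eq_norm] at hB
  have hAB := dotProduct_mulVec_le_norm_mul_dotProduct_self (A - B) x
  rw [sub_mulVec, dotProduct_sub] at hAB
  nlinarith [h x, dotProduct_self_nonneg x]

lemma isUnit_det [DecidableEq ι] (h : CoerciveWith c A) (hc : 0 < c) : IsUnit A.det := by
  rw [isUnit_iff_ne_zero, Ne, ← exists_mulVec_eq_zero_iff]
  rintro ⟨x, hx, hAx⟩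
  have h1 := h x
  rw [hAx, dotProduct_zero] at h1
  nlinarith [dotProduct_self_pos hx]

lemma norm_inv_le [DecidableEq ι] (h : CoerciveWith c A) (hc : 0 < c) : ‖A⁻¹‖ ≤ c⁻¹ := by
  rw [← l2_opNorm_toEuclideanCLM]
  refine ContinuousLinearMap.opNorm_le_bound _ (inv_nonneg.2 hc.le) fun y => ?_
  obtain ⟨y, rfl⟩ : ∃ w : ι → ℝ, WithLp.toLp 2 w = y := ⟨y.ofLp, rfl⟩
  set x := A⁻¹ *ᵥ y
  have hAx : A *ᵥ x = y := by
    rw [mulVec_mulVec, mul_nonsing_inv _ (h.isUnit_det hc), one_mulVec]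
  have hcs := real_inner_le_norm (WithLp.toLp 2 x : EuclideanSpace ℝ ι) (WithLp.toLp 2 y)
  rw [EuclideanSpace.inner_toLp_toLp, star_trivial, dotProduct_comm] at hcs
  have hx := h x
  rw [hAx, dotProduct_self_eq_norm_sq] at hx
  rw [toEuclideanCLM_toLp, ← div_eq_inv_mul, le_div_iff₀ hc]
  rcases (norm_nonneg (WithLp.toLp 2 x : EuclideanSpace ℝ ι)).eq_or_lt with hx0 | hx0
  · rw [← hx0, zero_mul]
    positivity
  · nlinarith

lemma posDef (h : CoerciveWith c A) (hA : A.IsSymm) (hc : 0 < c) : A.PosDef :=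
  PosDef.of_dotProduct_mulVec_pos (isHermitian_iff_isSymm.2 hA) fun x hx => by
    simpa using (mul_pos hc (dotProduct_self_pos hx)).trans_le (h x)

end CoerciveWith

lemma coerciveWith_iff_posSemidef_sub [DecidableEq ι] {c : ℝ} {A : Matrix ι ι ℝ} (hA : A.IsSymm) :
    CoerciveWith c A ↔ (A - c • 1).PosSemidef := by
  simp only [posSemidef_iff_dotProduct_mulVec, isHermitian_iff_isSymm, hA.sub (isSymm_one.smul c),
    true_and, star_trivial, sub_mulVec, smul_mulVec, one_mulVec, dotProduct_sub, dotProduct_smul,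
    smul_eq_mul, sub_nonneg, CoerciveWith]

lemma PosDef.dotProduct_self_le_norm_inv_mul [DecidableEq ι] {A : Matrix ι ι ℝ} (hA : A.PosDef)
    (y : ι → ℝ) : y ⬝ᵥ y ≤ ‖A⁻¹‖ * (y ⬝ᵥ A *ᵥ y) := by
  set z := A⁻¹ *ᵥ y
  have hAz : A *ᵥ z = y := by
    rw [mulVec_mulVec, mul_nonsing_inv _ ((isUnit_iff_isUnit_det A).1 hA.isUnit), one_mulVec]
  have hzA : z ᵥ* A = y := by
    rw [← isHermitian_iff_isSymm.1 hA.isHermitian, vecMul_transpose, hAz]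
  have hcs := LinearMap.BilinForm.apply_mul_apply_le_of_forall_zero_le (toLinearMap₂' ℝ A)
    (fun x => by simpa [toLinearMap₂'_apply'] using hA.posSemidef.dotProduct_mulVec_nonneg x) y z
  simp only [toLinearMap₂'_apply', hAz, dotProduct_mulVec z A y, hzA] at hcs
  have hyz : z ⬝ᵥ y ≤ ‖A⁻¹‖ * (y ⬝ᵥ y) := by
    rw [dotProduct_comm]
    exact dotProduct_mulVec_le_norm_mul_dotProduct_self A⁻¹ y
  have hform : 0 ≤ y ⬝ᵥ A *ᵥ y := by simpa using hA.posSemidef.dotProduct_mulVec_nonneg y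
  rcases (dotProduct_self_nonneg y).eq_or_lt with hy | hy
  · rw [← hy]
    exact mul_nonneg (norm_nonneg _) hform
  · nlinarith

end Matrix

section Calculus

variable {ι : Type*} [Fintype ι] [DecidableEq ι] {P : ℝ → Matrix ι ι ℝ} {P' : Matrix ι ι ℝ} {t : ℝ}

lemma HasDerivAt.matrix_transpose (h : HasDerivAt P P' t) :
    HasDerivAt (fun s => (P s)ᵀ) P'ᵀ t :=
  (transposeLinearEquiv ι ι ℝ ℝ).toLinearMap.toContinuousLinearMap.hasFDerivAt.comp_hasDerivAt t h

lemma HasDerivAt.dotProduct_mulVec_self (x : ι → ℝ) (h : HasDerivAt P P' t) :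
    HasDerivAt (fun s => x ⬝ᵥ P s *ᵥ x) (x ⬝ᵥ P' *ᵥ x) t :=
  let form : Matrix ι ι ℝ →ₗ[ℝ] ℝ :=
    { toFun := fun A => x ⬝ᵥ A *ᵥ x
      map_add' := fun A B => by simp only [add_mulVec, dotProduct_add]
      map_smul' := fun r A => by simp only [smul_mulVec, dotProduct_smul, RingHom.id_apply] }
  form.toContinuousLinearMap.hasFDerivAt.comp_hasDerivAt t h

end Calculus

theorem nonneg_of_mul_le_deriv {g g' : ℝ → ℝ} {K a b : ℝ} (hg : ContinuousOn g (Icc a b))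
    (hg' : ∀ t ∈ Ico a b, HasDerivWithinAt g (g' t) (Ici t) t)
    (hbound : ∀ t ∈ Ico a b, K * g t ≤ g' t) (ha : 0 ≤ g a) : ∀ t ∈ Icc a b, 0 ≤ g t := by
  intro t ht
  have hbound' : ∀ s ∈ Ico a b, -g' s ≤ K * -g s + 0 := fun s hs => by linarith [hbound s hs]
  have := le_gronwallBound_of_liminf_deriv_right_le hg.neg
    (fun s hs r hr => (hg' s hs).neg.liminf_right_slope_le hr) (neg_nonpos.2 ha) hbound' t ht
  rw [gronwallBound_ε0_δ0] at this
  exact neg_nonpos.1 this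

section MatrixODE

variable {ι : Type*} [Fintype ι] [DecidableEq ι] {P Q : ℝ → Matrix ι ι ℝ} {a b : ℝ}

theorem isSymm_of_hasDerivAt_smul_add {m : ℝ → ℝ} {K : ℝ}
    (hP : ∀ t ∈ Icc a b, HasDerivAt P (m t • P t + Q t) t) (hQ : ∀ t, (Q t).IsSymm)
    (hm : ∀ t ∈ Icc a b, |m t| ≤ K) (ha : (P a).IsSymm) : ∀ t ∈ Icc a b, (P t).IsSymm := by
  have hD : ∀ t ∈ Icc a b,
      HasDerivAt (fun s => (P s)ᵀ - P s) (m t • ((P t)ᵀ - P t)) t := by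
    intro t ht
    refine ((hP t ht).matrix_transpose.sub (hP t ht)).congr_deriv ?_
    rw [transpose_add, transpose_smul, (hQ t).eq, smul_sub]
    abel
  have hD0 := eq_zero_of_abs_deriv_le_mul_abs_self_of_eq_zero_right
    (fun t ht => (hD t ht).continuousAt.continuousWithinAt)
    (fun t ht => (hD t (Ico_subset_Icc_self ht)).hasDerivWithinAt) (by rw [ha.eq, sub_self])
    fun t ht => by
      rw [norm_smul, Real.norm_eq_abs]
      exact mul_le_mul_of_nonneg_right (hm t (Ico_subset_Icc_self ht)) (norm_nonneg _)
  exact fun t ht => sub_eq_zero.1 (hD0 t ht)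

variable {κ₀ μ₀ : ℝ}

theorem isSymm_of_hasDerivAt_of_coerciveWith (hκ₀ : 0 ≤ κ₀) (hμ₀ : 0 ≤ μ₀) {c : ℝ} (hc : 0 < c)
    (hP : ∀ t ∈ Icc a b, HasDerivAt P (-(μ₀ * (1 - κ₀ * ‖(P t)⁻¹‖)) • P t + Q t) t)
    (hQ : ∀ t, (Q t).IsSymm) (hcoer : ∀ t ∈ Icc a b, CoerciveWith c (P t))
    (ha : (P a).IsSymm) : ∀ t ∈ Icc a b, (P t).IsSymm := by
  refine isSymm_of_hasDerivAt_smul_add hP hQ (K := μ₀ * (1 + κ₀ * c⁻¹)) (fun t ht => ?_) ha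
  have hinv := (hcoer t ht).norm_inv_le hc
  rw [abs_neg, abs_mul, abs_of_nonneg hμ₀]
  refine mul_le_mul_of_nonneg_left (abs_le.2 ⟨?_, ?_⟩) hμ₀
  · nlinarith [mul_le_mul_of_nonneg_left hinv hκ₀]
  · nlinarith [mul_nonneg hκ₀ (norm_nonneg (P t)⁻¹), inv_pos.2 hc]

theorem coerciveWith_of_hasDerivAt_of_posDef (hκ₀ : 0 ≤ κ₀) (hμ₀ : 0 ≤ μ₀)
    (hP : ∀ t ∈ Icc a b, HasDerivAt P (-(μ₀ * (1 - κ₀ * ‖(P t)⁻¹‖)) • P t + Q t) t)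
    (hQ : ∀ t, (Q t).PosSemidef) (hpos : ∀ t ∈ Icc a b, (P t).PosDef)
    (ha : CoerciveWith κ₀ (P a)) : ∀ t ∈ Icc a b, CoerciveWith κ₀ (P t) := by
  intro t ht y
  have hg : ∀ s ∈ Icc a b, HasDerivAt (fun s => y ⬝ᵥ P s *ᵥ y - κ₀ * (y ⬝ᵥ y))
      (y ⬝ᵥ (-(μ₀ * (1 - κ₀ * ‖(P s)⁻¹‖)) • P s + Q s) *ᵥ y) s :=
    fun s hs => ((hP s hs).dotProduct_mulVec_self y).sub_const _
  refine sub_nonneg.1 <| nonneg_of_mul_le_deriv (K := -μ₀)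
    (fun s hs => (hg s hs).continuousAt.continuousWithinAt)
    (fun s hs => (hg s (Ico_subset_Icc_self hs)).hasDerivWithinAt) (fun s hs => ?_)
    (sub_nonneg.2 (ha y)) t ht
  have hN := (hpos s (Ico_subset_Icc_self hs)).dotProduct_self_le_norm_inv_mul y
  have hQy : 0 ≤ y ⬝ᵥ Q s *ᵥ y := by simpa using (hQ s).dotProduct_mulVec_nonneg y
  simp only [add_mulVec, smul_mulVec, dotProduct_add, dotProduct_smul, smul_eq_mul]
  nlinarith [mul_le_mul_of_nonneg_left hN (mul_nonneg hμ₀ hκ₀)]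

theorem coerciveWith_of_hasDerivAt (hκ₀ : 0 < κ₀) (hμ₀ : 0 ≤ μ₀)
    (hP : ∀ t ≥ 0, HasDerivAt P (-(μ₀ * (1 - κ₀ * ‖(P t)⁻¹‖)) • P t + Q t) t)
    (hQ : ∀ t, (Q t).PosSemidef) (hP0sym : (P 0).IsSymm) (hP0 : CoerciveWith κ₀ (P 0)) :
    ∀ t ≥ 0, CoerciveWith κ₀ (P t) := by
  intro b hb
  have hclosed : IsClosed ({t | CoerciveWith κ₀ (P t)} ∩ Icc 0 b) := by
    rw [inter_comm]
    exact ContinuousOn.preimage_isClosed_of_isClosed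
      (fun t ht => (hP t ht.1).continuousAt.continuousWithinAt) isClosed_Icc
      (isClosed_setOf_coerciveWith κ₀)
  refine hclosed.Icc_subset_of_forall_mem_nhdsGT_of_Icc_subset hP0 (fun T hT hsub => ?_)
    ⟨hb, le_rfl⟩
  have hPT : CoerciveWith κ₀ (P T) := hsub ⟨hT.1, le_rfl⟩
  obtain ⟨ε, hε, hnear⟩ := Metric.eventually_nhds_iff.1 <|
    (hP T hT.1).continuousAt.eventually (hPT.eventually_nhds (half_lt_self hκ₀))
  have hu : ∀ t ∈ Icc T (T + ε / 2), CoerciveWith (κ₀ / 2) (P t) := fun t ht => hnear <| by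
    rw [Real.dist_eq, abs_of_nonneg (sub_nonneg.2 ht.1)]
    linarith [ht.2]
  have hhalf : ∀ t ∈ Icc 0 (T + ε / 2), CoerciveWith (κ₀ / 2) (P t) := fun t ht => by
    rcases le_total t T with htT | hTt
    · exact (hsub ⟨ht.1, htT⟩).mono (half_le_self hκ₀.le)
    · exact hu t ⟨hTt, ht.2⟩
  have hsymm := isSymm_of_hasDerivAt_of_coerciveWith hκ₀.le hμ₀ (half_pos hκ₀)
    (fun t ht => hP t ht.1) (fun t => isHermitian_iff_isSymm.1 (hQ t).isHermitian) hhalf hP0sym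
  have hstep := coerciveWith_of_hasDerivAt_of_posDef hκ₀.le hμ₀
    (fun t ht => hP t (hT.1.trans ht.1)) hQ
    (fun t ht => (hu t ht).posDef (hsymm t ⟨hT.1.trans ht.1, ht.2⟩) (half_pos hκ₀)) hPT
  exact mem_of_superset (Icc_mem_nhdsGT (by linarith)) hstep

end MatrixODE

theorem stmt5_general {n nθ : ℕ} (κ₀ μ₀ : ℝ) (hκ₀ : 0 < κ₀) (hμ₀ : 0 < μ₀)
    (Y : ℝ → Matrix (Fin n) (Fin nθ) ℝ)
    (P : ℝ → Matrix (Fin nθ) (Fin nθ) ℝ)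
    (hode : ∀ t ≥ (0 : ℝ),
      HasDerivAt P (-(μ₀ * (1 - κ₀ * ‖(P t)⁻¹‖)) • P t + (Y t)ᵀ * Y t) t)
    (hP0sym : (P 0).IsSymm)
    (hP0 : (P 0 - κ₀ • (1 : Matrix (Fin nθ) (Fin nθ) ℝ)).PosSemidef) :
    ∀ t ≥ (0 : ℝ),
      (P t - κ₀ • (1 : Matrix (Fin nθ) (Fin nθ) ℝ)).PosSemidef ∧
      ‖(P t)⁻¹‖ ≤ 1 / κ₀ ∧ 0 ≤ μ₀ * (1 - κ₀ * ‖(P t)⁻¹‖) := by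
  intro t ht
  have hQ (s : ℝ) : ((Y s)ᵀ * Y s).PosSemidef := by
    simpa using posSemidef_conjTranspose_mul_self (Y s)
  have hcoer := coerciveWith_of_hasDerivAt hκ₀ hμ₀.le hode hQ hP0sym
    ((coerciveWith_iff_posSemidef_sub hP0sym).2 hP0)
  have hsymm := isSymm_of_hasDerivAt_of_coerciveWith hκ₀.le hμ₀.le hκ₀
    (fun s hs => hode s hs.1) (fun s => isHermitian_iff_isSymm.1 (hQ s).isHermitian)
    (fun s hs => hcoer s hs.1) hP0sym t ⟨ht, le_rfl⟩
  have hinv := (hcoer t ht).norm_inv_le hκ₀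
  refine ⟨(coerciveWith_iff_posSemidef_sub hsymm).1 (hcoer t ht), by rwa [one_div], ?_⟩
  have hκN : κ₀ * ‖(P t)⁻¹‖ ≤ 1 := by
    rwa [← le_div_iff₀' hκ₀, one_div]
  exact mul_nonneg hμ₀.le (sub_nonneg.2 hκN)

/-- For Ṗ = −μ₀(1 − κ₀‖P⁻¹‖)P + YᵀY with P(0) ⪰ κ₀I, the bound P(t) ⪰ κ₀I persists for
all t ≥ 0, whence ‖P(t)⁻¹‖ ≤ 1/κ₀ and μ(t) = μ₀(1 − κ₀‖P(t)⁻¹‖) ≥ 0. -/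
theorem stmt5 {n nθ : ℕ} (κ₀ μ₀ : ℝ) (hκ₀ : 0 < κ₀) (hμ₀ : 0 < μ₀)
    (Y : ℝ → Matrix (Fin n) (Fin nθ) ℝ) (hYcont : Continuous Y)
    (P : ℝ → Matrix (Fin nθ) (Fin nθ) ℝ)
    (hode : ∀ t ≥ (0 : ℝ),
      HasDerivAt P (-(μ₀ * (1 - κ₀ * ‖(P t)⁻¹‖)) • P t + (Y t)ᵀ * Y t) t)
    (hP0sym : (P 0).IsSymm)
    (hP0 : (P 0 - κ₀ • (1 : Matrix (Fin nθ) (Fin nθ) ℝ)).PosSemidef) :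
    ∀ t ≥ (0 : ℝ),
      (P t - κ₀ • (1 : Matrix (Fin nθ) (Fin nθ) ℝ)).PosSemidef ∧
      ‖(P t)⁻¹‖ ≤ 1 / κ₀ ∧ 0 ≤ μ₀ * (1 - κ₀ * ‖(P t)⁻¹‖) :=
  stmt5_general κ₀ μ₀ hκ₀ hμ₀ Y P hode hP0sym hP0
end

section
/- Given the adaptation law θ̃̇ = −Γ(Yᵀη + (ξ + δ)Pθ̃) with Γ symmetric positive definite, P(t) ⪰ κ₀ I, δ > 0, and ξ(t) = α‖Y(t)ᵀη(t)‖/κ₀ with α > 0, the function V(t) = ½ θ̃ᵀ Γ⁻¹ θ̃ satisfies V̇ ≤ (1 − α‖θ̃‖)‖Yᵀη‖‖θ̃‖ − δκ₀‖θ̃‖², hence V̇ < 0 whenever ‖θ̃(t)‖ > 1/α. -/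
/-!
Because the adaptation law is a `Γ`-scaled gradient, `Γ⁻¹` cancels in `V̇`, leaving
`V̇ = -θ̃ᵀYᵀη - (ξ + δ) θ̃ᵀPθ̃`. Cauchy–Schwarz bounds the first term by `‖Yᵀη‖‖θ̃‖` and `P ⪰ κ₀I`
bounds the second by `-(ξ + δ) κ₀ ‖θ̃‖²`. The choice `ξ κ₀ = α ‖Yᵀη‖` makes the data-dependent
damping `-α ‖Yᵀη‖ ‖θ̃‖²`, which dominates the cross term once `‖θ̃‖ > 1 / α`.
-/

open Matrix

/-- Euclidean norm of a vector in `Fin k → ℝ`. -/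
noncomputable def euclNorm {k : ℕ} (x : Fin k → ℝ) : ℝ := Real.sqrt (x ⬝ᵥ x)

theorem euclNorm_nonneg {k : ℕ} (x : Fin k → ℝ) : 0 ≤ euclNorm x := Real.sqrt_nonneg _

theorem euclNorm_eq_norm {k : ℕ} (x : Fin k → ℝ) :
    euclNorm x = ‖WithLp.toLp 2 x‖ := by
  rw [euclNorm, ← Real.sqrt_sq (norm_nonneg _), ← real_inner_self_eq_norm_sq,
    EuclideanSpace.inner_toLp_toLp, star_trivial]

theorem euclNorm_sq {k : ℕ} (x : Fin k → ℝ) : euclNorm x ^ 2 = x ⬝ᵥ x := by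
  rw [euclNorm_eq_norm, ← real_inner_self_eq_norm_sq, EuclideanSpace.inner_toLp_toLp, star_trivial]

theorem abs_dotProduct_le_euclNorm_mul {k : ℕ} (x y : Fin k → ℝ) :
    |x ⬝ᵥ y| ≤ euclNorm x * euclNorm y := by
  rw [euclNorm_eq_norm, euclNorm_eq_norm, dotProduct_comm, ← star_trivial x,
    ← EuclideanSpace.inner_toLp_toLp, star_trivial]
  exact abs_real_inner_le_norm _ _

theorem Matrix.IsSymm.dotProduct_mulVec_comm {ι R : Type*} [Fintype ι] [CommSemiring R]
    {A : Matrix ι ι R} (hA : A.IsSymm) (x y : ι → R) : x ⬝ᵥ A *ᵥ y = y ⬝ᵥ A *ᵥ x := by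
  rw [dotProduct_mulVec, ← mulVec_transpose, hA.eq, dotProduct_comm]

section Deriv

variable {𝕜 ι : Type*} [NontriviallyNormedField 𝕜] [Fintype ι] {f g : 𝕜 → ι → 𝕜}
  {f' g' : ι → 𝕜} {t : 𝕜}

theorem HasDerivAt.dotProduct (hf : HasDerivAt f f' t) (hg : HasDerivAt g g' t) :
    HasDerivAt (fun s => f s ⬝ᵥ g s) (f' ⬝ᵥ g t + f t ⬝ᵥ g') t := by
  rw [hasDerivAt_pi] at hf hg
  simpa only [_root_.dotProduct, ← Finset.sum_add_distrib]
    using HasDerivAt.fun_sum fun i _ => (hf i).fun_mul (hg i)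

theorem HasDerivAt.mulVec {m : Type*} (A : Matrix m ι 𝕜) (hf : HasDerivAt f f' t) :
    HasDerivAt (fun s => A *ᵥ f s) (A *ᵥ f') t := by
  rw [hasDerivAt_pi] at hf ⊢
  intro i
  simpa only [Matrix.mulVec, _root_.dotProduct]
    using HasDerivAt.fun_sum fun j _ => (hf j).const_mul (A i j)

theorem Matrix.IsSymm.hasDerivAt_dotProduct_mulVec_self {A : Matrix ι ι 𝕜} (hA : A.IsSymm)
    (hf : HasDerivAt f f' t) :
    HasDerivAt (fun s => f s ⬝ᵥ A *ᵥ f s) (2 * (f t ⬝ᵥ A *ᵥ f')) t := by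
  convert hf.dotProduct (hf.mulVec A) using 1
  rw [hA.dotProduct_mulVec_comm, two_mul]

end Deriv

theorem Matrix.PosDef.hasDerivAt_half_dotProduct_inv_mulVec {ι : Type*} [Fintype ι]
    [DecidableEq ι] {Γ : Matrix ι ι ℝ} (hΓ : Γ.PosDef) {θ : ℝ → ι → ℝ} {v : ι → ℝ} {t : ℝ}
    (hθ : HasDerivAt θ (-(Γ *ᵥ v)) t) :
    HasDerivAt (fun s => (1 / 2 : ℝ) * (θ s ⬝ᵥ Γ⁻¹ *ᵥ θ s)) (-(θ t ⬝ᵥ v)) t := by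
  have hsymm : Γ⁻¹.IsSymm := isHermitian_iff_isSymm.1 hΓ.inv.isHermitian
  refine ((hsymm.hasDerivAt_dotProduct_mulVec_self hθ).const_mul (1 / 2 : ℝ)).congr_deriv ?_
  rw [mulVec_neg, mulVec_mulVec, nonsing_inv_mul _ ((isUnit_iff_isUnit_det Γ).1 hΓ.isUnit),
    one_mulVec, dotProduct_neg]
  ring

theorem mul_euclNorm_sq_le_dotProduct_mulVec {k : ℕ} {P : Matrix (Fin k) (Fin k) ℝ} {κ : ℝ}
    (hP : (P - κ • 1).PosSemidef) (x : Fin k → ℝ) : κ * euclNorm x ^ 2 ≤ x ⬝ᵥ P *ᵥ x := by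
  have := hP.dotProduct_mulVec_nonneg x
  rw [star_trivial, sub_mulVec, smul_mulVec, one_mulVec, dotProduct_sub, dotProduct_smul,
    smul_eq_mul, ← euclNorm_sq] at this
  linarith

theorem neg_dotProduct_adaptation_le {k : ℕ} (θ w : Fin k → ℝ) (P : Matrix (Fin k) (Fin k) ℝ)
    {κ₀ δ α : ℝ} (hκ₀ : 0 < κ₀) (hδ : 0 ≤ δ) (hα : 0 ≤ α) (hP : (P - κ₀ • 1).PosSemidef) :
    -(θ ⬝ᵥ (w + (α * euclNorm w / κ₀ + δ) • P *ᵥ θ)) ≤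
      (1 - α * euclNorm θ) * euclNorm w * euclNorm θ - δ * κ₀ * euclNorm θ ^ 2 := by
  have hcs : -(θ ⬝ᵥ w) ≤ euclNorm θ * euclNorm w :=
    (neg_le_abs _).trans (abs_dotProduct_le_euclNorm_mul θ w)
  have hcoef : 0 ≤ α * euclNorm w / κ₀ + δ := by
    have := euclNorm_nonneg w
    positivity
  have hquad := mul_le_mul_of_nonneg_left (mul_euclNorm_sq_le_dotProduct_mulVec hP θ) hcoef
  rw [dotProduct_add, dotProduct_smul, smul_eq_mul]
  calc -(θ ⬝ᵥ w + (α * euclNorm w / κ₀ + δ) * (θ ⬝ᵥ P *ᵥ θ))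
      ≤ euclNorm θ * euclNorm w - (α * euclNorm w / κ₀ + δ) * (κ₀ * euclNorm θ ^ 2) := by
        linarith
    _ = (1 - α * euclNorm θ) * euclNorm w * euclNorm θ - δ * κ₀ * euclNorm θ ^ 2 := by
        field_simp
        ring

theorem stmt7_general {n nθ : ℕ} (Γ : Matrix (Fin nθ) (Fin nθ) ℝ)
    (hΓpd : Γ.PosDef)
    (Y : ℝ → Matrix (Fin n) (Fin nθ) ℝ) (η : ℝ → (Fin n → ℝ))
    (P : ℝ → Matrix (Fin nθ) (Fin nθ) ℝ)
    (κ₀ δ α : ℝ) (hκ₀ : 0 < κ₀) (hδ : 0 < δ) (hα : 0 < α)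
    (hP : ∀ t : ℝ, ((P t) - κ₀ • (1 : Matrix (Fin nθ) (Fin nθ) ℝ)).PosSemidef)
    (ξ : ℝ → ℝ) (hξ : ∀ t : ℝ, ξ t = α * euclNorm ((Y t)ᵀ.mulVec (η t)) / κ₀)
    (θtil : ℝ → (Fin nθ → ℝ))
    (hθtil : ∀ t : ℝ, ∀ i, HasDerivAt (fun s => θtil s i)
      ((-(Γ.mulVec ((Y t)ᵀ.mulVec (η t) + (ξ t + δ) • (P t).mulVec (θtil t)))) i) t) :
    ∀ t : ℝ, ∀ D : ℝ,
      HasDerivAt (fun s => (1 / 2 : ℝ) * ((θtil s) ⬝ᵥ Γ⁻¹.mulVec (θtil s))) D t →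
      D ≤ (1 - α * euclNorm (θtil t)) * euclNorm ((Y t)ᵀ.mulVec (η t)) * euclNorm (θtil t)
          - δ * κ₀ * (euclNorm (θtil t)) ^ 2 ∧
      (1 / α < euclNorm (θtil t) → D < 0) := by
  intro t D hD
  have hV := hΓpd.hasDerivAt_half_dotProduct_inv_mulVec (hasDerivAt_pi.2 (hθtil t))
  rw [hξ t] at hV
  have hbound := hD.unique hV ▸
    neg_dotProduct_adaptation_le (θtil t) ((Y t)ᵀ *ᵥ η t) (P t) hκ₀ hδ.le hα.le (hP t)
  refine ⟨hbound, fun hlarge => hbound.trans_lt ?_⟩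
  have hθpos : 0 < euclNorm (θtil t) := (one_div_pos.2 hα).trans hlarge
  have hαθ : 1 < α * euclNorm (θtil t) := by rwa [div_lt_iff₀ hα, mul_comm] at hlarge
  have hcross : (1 - α * euclNorm (θtil t)) * euclNorm ((Y t)ᵀ *ᵥ η t) * euclNorm (θtil t) ≤ 0 :=
    mul_nonpos_of_nonpos_of_nonneg
      (mul_nonpos_of_nonpos_of_nonneg (by linarith) (euclNorm_nonneg _)) hθpos.le
  have hdamp : 0 < δ * κ₀ * euclNorm (θtil t) ^ 2 := by positivity
  linarith

/-- For the composite adaptation law θ̃̇ = −Γ(Yᵀη + (ξ+δ)Pθ̃) with P ⪰ κ₀I and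
ξ = α‖Yᵀη‖/κ₀, the function V = ½θ̃ᵀΓ⁻¹θ̃ satisfies
V̇ ≤ (1 − α‖θ̃‖)‖Yᵀη‖‖θ̃‖ − δκ₀‖θ̃‖², hence V̇ < 0 whenever ‖θ̃‖ > 1/α. -/
theorem stmt7 {n nθ : ℕ} (Γ : Matrix (Fin nθ) (Fin nθ) ℝ)
    (hΓsym : Γ.IsSymm) (hΓpd : Γ.PosDef)
    (Y : ℝ → Matrix (Fin n) (Fin nθ) ℝ) (η : ℝ → (Fin n → ℝ))
    (P : ℝ → Matrix (Fin nθ) (Fin nθ) ℝ)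
    (hPsym : ∀ t : ℝ, (P t).IsSymm)
    (κ₀ δ α : ℝ) (hκ₀ : 0 < κ₀) (hδ : 0 < δ) (hα : 0 < α)
    (hP : ∀ t : ℝ, ((P t) - κ₀ • (1 : Matrix (Fin nθ) (Fin nθ) ℝ)).PosSemidef)
    (ξ : ℝ → ℝ) (hξ : ∀ t : ℝ, ξ t = α * euclNorm ((Y t)ᵀ.mulVec (η t)) / κ₀)
    (θtil : ℝ → (Fin nθ → ℝ))
    (hθtil : ∀ t : ℝ, ∀ i, HasDerivAt (fun s => θtil s i)
      ((-(Γ.mulVec ((Y t)ᵀ.mulVec (η t) + (ξ t + δ) • (P t).mulVec (θtil t)))) i) t) :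
    ∀ t : ℝ, ∀ D : ℝ,
      HasDerivAt (fun s => (1 / 2 : ℝ) * ((θtil s) ⬝ᵥ Γ⁻¹.mulVec (θtil s))) D t →
      D ≤ (1 - α * euclNorm (θtil t)) * euclNorm ((Y t)ᵀ.mulVec (η t)) * euclNorm (θtil t)
          - δ * κ₀ * (euclNorm (θtil t)) ^ 2 ∧
      (1 / α < euclNorm (θtil t) → D < 0) :=
  stmt7_general Γ hΓpd Y η P κ₀ δ α hκ₀ hδ hα hP ξ hξ θtil hθtil
end

section
/- If V : ℝ≥0 → ℝ is differentiable, bounded below by λ_m‖x(t)‖² and above by λ_M‖x(t)‖², and V̇(t) ≤ −c‖x(t)‖² whenever ‖x(t)‖ ≥ r, then x(t) eventually enters and remains in the ball of radius r√(λ_M/λ_m). -/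
open Filter Set

/-- Comparison argument: if λ_m‖x‖² ≤ V ≤ λ_M‖x‖² and V̇ ≤ −c‖x‖² whenever ‖x‖ ≥ r, then
x eventually enters and remains in the ball of radius r√(λ_M/λ_m). -/
theorem stmt8 {k : ℕ} (x : ℝ → EuclideanSpace ℝ (Fin k)) (hx : Continuous x)
    (V V' : ℝ → ℝ) (hV : ∀ t : ℝ, HasDerivAt V (V' t) t)
    (lm lM : ℝ) (hlm : 0 < lm) (hlmM : lm ≤ lM)
    (hVlow : ∀ t ≥ (0 : ℝ), lm * ‖x t‖ ^ 2 ≤ V t)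
    (hVup : ∀ t ≥ (0 : ℝ), V t ≤ lM * ‖x t‖ ^ 2)
    (c r : ℝ) (hc : 0 < c) (hr : 0 < r)
    (hdecay : ∀ t ≥ (0 : ℝ), r ≤ ‖x t‖ → V' t ≤ -c * ‖x t‖ ^ 2) :
    ∃ T ≥ (0 : ℝ), ∀ t ≥ T, ‖x t‖ ≤ r * Real.sqrt (lM / lm) := by
  have hlM : 0 < lM := hlm.trans_le hlmM
  have hcr : 0 < c * r ^ 2 := by positivity
  have hVdiff : Differentiable ℝ V := fun t => (hV t).differentiableAt
  have hVcont : Continuous V := hVdiff.continuous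
  -- Step 1: there is a time T ≥ 0 with ‖x T‖ < r
  have step1 : ∃ T ≥ (0:ℝ), ‖x T‖ < r := by
    by_contra h
    push_neg at h
    set g : ℝ → ℝ := fun t => V t + c * r ^ 2 * t with hg
    have hg' : ∀ t, HasDerivAt g (V' t + c * r ^ 2) t := by
      intro t
      have h2 : HasDerivAt (fun s : ℝ => c * r ^ 2 * s) (c * r ^ 2) t := by
        simpa using (hasDerivAt_id t).const_mul (c * r ^ 2)
      exact (hV t).add h2
    have hanti : AntitoneOn g (Ici (0:ℝ)) := by
      apply antitoneOn_of_deriv_nonpos (convex_Ici 0)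
      · exact (hVcont.add (by continuity)).continuousOn
      · intro u hu
        exact ((hg' u).differentiableAt).differentiableWithinAt
      · intro u hu
        rw [interior_Ici] at hu
        rw [(hg' u).deriv]
        have h1 : r ≤ ‖x u‖ := h u hu.le
        have h2 : V' u ≤ -c * ‖x u‖ ^ 2 := hdecay u hu.le h1
        nlinarith [mul_le_mul_of_nonneg_left (pow_le_pow_left₀ hr.le h1 2) hc.le]
    set t1 : ℝ := max 0 (V 0 / (c * r ^ 2)) + 1 with ht1def
    have ht1 : 0 ≤ t1 := by positivity
    have hle : g t1 ≤ g 0 := hanti (self_mem_Ici) (mem_Ici.mpr ht1) ht1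
    have hVlo := hVlow t1 ht1
    have hrx := h t1 ht1
    have hdivle : V 0 / (c * r ^ 2) ≤ t1 - 1 := by
      simp [ht1def]
    have hV0le : V 0 ≤ c * r ^ 2 * (t1 - 1) := by
      rwa [div_le_iff₀ hcr, mul_comm] at hdivle
    simp only [hg] at hle
    nlinarith [norm_nonneg (x t1)]
  obtain ⟨T, hT0, hTr⟩ := step1
  -- Step 2: V stays below lM * r ^ 2 after T
  have key : ∀ t ≥ T, V t ≤ lM * r ^ 2 := by
    intro t ht
    by_contra hcon
    push_neg at hcon
    have hVT : V T < lM * r ^ 2 := by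
      have := hVup T hT0
      nlinarith [norm_nonneg (x T), mul_pos (sub_pos.mpr hTr) (add_pos_of_nonneg_of_pos (norm_nonneg (x T)) hr)]
    have hTt : T < t := by
      rcases lt_or_eq_of_le ht with h | h
      · exact h
      · exfalso; rw [← h] at hcon; linarith
    set S : Set ℝ := {u | u ∈ Icc T t ∧ V u ≤ lM * r ^ 2} with hS
    have hSne : S.Nonempty := ⟨T, ⟨le_refl _, hTt.le⟩, hVT.le⟩
    have hSbdd : BddAbove S := ⟨t, fun u hu => hu.1.2⟩
    have hSclosed : IsClosed S := by
      have : S = Icc T t ∩ V ⁻¹' (Iic (lM * r ^ 2)) := by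
        ext u; simp [hS, and_assoc]
      rw [this]
      exact isClosed_Icc.inter (isClosed_Iic.preimage hVcont)
    set s := sSup S with hs
    have hsmem : s ∈ S := hSclosed.csSup_mem hSne hSbdd
    have hst : s < t := lt_of_le_of_ne hsmem.1.2 (by
      intro h; rw [h] at hsmem; linarith [hsmem.2])
    have hgt : ∀ u, s < u → u ≤ t → lM * r ^ 2 < V u := by
      intro u hsu hut
      by_contra hVu
      push_neg at hVu
      have : u ∈ S := ⟨⟨hsmem.1.1.trans hsu.le, hut⟩, hVu⟩
      exact absurd (le_csSup hSbdd this) (not_le.mpr hsu)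
    have hanti : StrictAntiOn V (Icc s t) := by
      apply strictAntiOn_of_deriv_neg (convex_Icc s t) hVcont.continuousOn
      intro u hu
      rw [interior_Icc] at hu
      have hVu : lM * r ^ 2 < V u := hgt u hu.1 hu.2.le
      have hxu : r < ‖x u‖ := by
        have hup := hVup u (hT0.trans (hsmem.1.1.trans hu.1.le))
        have : r ^ 2 < ‖x u‖ ^ 2 := by nlinarith
        exact lt_of_pow_lt_pow_left₀ 2 (norm_nonneg _) this
      have hd := hdecay u (hT0.trans (hsmem.1.1.trans hu.1.le)) hxu.le
      rw [(hV u).deriv]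
      nlinarith [mul_pos hc (pow_pos (hr.trans hxu) 2)]
    have := hanti ⟨le_refl s, hst.le⟩ ⟨hst.le, le_refl t⟩ hst
    linarith [hsmem.2]
  -- Step 3: conclude
  refine ⟨T, hT0, fun t ht => ?_⟩
  have h1 := key t ht
  have h2 := hVlow t (hT0.trans ht)
  have hx2 : ‖x t‖ ^ 2 ≤ r ^ 2 * (lM / lm) := by
    rw [mul_div_assoc', le_div_iff₀ hlm]
    nlinarith
  calc ‖x t‖ = Real.sqrt (‖x t‖ ^ 2) := (Real.sqrt_sq (norm_nonneg _)).symm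
    _ ≤ Real.sqrt (r ^ 2 * (lM / lm)) := Real.sqrt_le_sqrt hx2
    _ = r * Real.sqrt (lM / lm) := by
        rw [Real.sqrt_mul (sq_nonneg r), Real.sqrt_sq hr.le]
end

section
/- For a time-varying delay T : ℝ≥0 → ℝ with 0 ≤ T(t) ≤ h, and any continuous q̇ : ℝ → ℝⁿ, the functional V₃(t) = ∫_{−h}^0 ∫_{t+θ}^t q̇(s)ᵀ R q̇(s) ds dθ (R ⪰ 0) satisfies V̇₃(t) ≤ h q̇(t)ᵀ R q̇(t) − (1/h) L(t)ᵀ R L(t), where L(t) = ∫_{t−T(t)}^t q̇(s) ds. -/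
open Matrix MeasureTheory intervalIntegral

/-!
With `F` a primitive of `f = q̇ᵀ R q̇`, the inner integral is `F u - F (u + θ)`, so
`V₃ u = h F u - ∫_{u-h}^u F` and `V̇₃ t = h f t - ∫_{t-h}^t f`. Since `f ≥ 0`, the last integral is
at least `∫_{t-T}^t f`, and Jensen's inequality `Lᵀ R L ≤ T ∫_{t-T}^t f` (from
`∫ (T q̇ - L)ᵀ R (T q̇ - L) ≥ 0`) together with `T ≤ h` bounds that from below by `Lᵀ R L / h`.
-/

section QuadraticForm

variable {ι : Type*} [Fintype ι] {R : Matrix ι ι ℝ} {q : ℝ → ι → ℝ} {a b : ℝ}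

theorem intervalIntegral.integral_const_dotProduct_mulVec (hq : IntervalIntegrable q volume a b)
    (v : ι → ℝ) : ∫ s in a..b, v ⬝ᵥ R *ᵥ q s = v ⬝ᵥ R *ᵥ ∫ s in a..b, q s := by
  classical
  let φ : (ι → ℝ) →L[ℝ] ℝ := LinearMap.toContinuousLinearMap (Matrix.toLinearMap₂' ℝ R v)
  simpa [φ, Matrix.toLinearMap₂'_apply'] using φ.intervalIntegral_comp_comm hq

theorem intervalIntegral.integral_dotProduct_mulVec_const (hq : IntervalIntegrable q volume a b)
    (v : ι → ℝ) : ∫ s in a..b, q s ⬝ᵥ R *ᵥ v = (∫ s in a..b, q s) ⬝ᵥ R *ᵥ v := by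
  classical
  let φ : (ι → ℝ) →L[ℝ] ℝ := LinearMap.toContinuousLinearMap ((Matrix.toLinearMap₂' ℝ R).flip v)
  simpa [φ, Matrix.toLinearMap₂'_apply'] using φ.intervalIntegral_comp_comm hq

theorem dotProduct_mulVec_intervalIntegral_le (hR : ∀ x, 0 ≤ x ⬝ᵥ R *ᵥ x) (hq : Continuous q)
    (hab : a ≤ b) :
    (∫ s in a..b, q s) ⬝ᵥ R *ᵥ (∫ s in a..b, q s) ≤ (b - a) * ∫ s in a..b, q s ⬝ᵥ R *ᵥ q s := by
  rcases hab.eq_or_lt with rfl | hab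
  · simp
  set L := ∫ s in a..b, q s with hL
  set τ := b - a
  have hexpand : ∀ x : ι → ℝ, (τ • x - L) ⬝ᵥ R *ᵥ (τ • x - L)
      = τ ^ 2 * (x ⬝ᵥ R *ᵥ x) - τ * (x ⬝ᵥ R *ᵥ L) - τ * (L ⬝ᵥ R *ᵥ x) + L ⬝ᵥ R *ᵥ L := by
    intro x
    simp only [sub_dotProduct, dotProduct_sub, mulVec_sub, mulVec_smul, smul_dotProduct,
      dotProduct_smul, smul_eq_mul]
    ring
  have hint : ∫ s in a..b, (τ • q s - L) ⬝ᵥ R *ᵥ (τ • q s - L)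
      = τ * (τ * (∫ s in a..b, q s ⬝ᵥ R *ᵥ q s) - L ⬝ᵥ R *ᵥ L) := by
    have hi : ∀ f : ℝ → ℝ, Continuous f → IntervalIntegrable f volume a b :=
      fun f hf => hf.intervalIntegrable a b
    simp_rw [hexpand]
    rw [integral_add (hi _ (by fun_prop)) intervalIntegrable_const,
      integral_sub (hi _ (by fun_prop)) (hi _ (by fun_prop)),
      integral_sub (hi _ (by fun_prop)) (hi _ (by fun_prop)),
      intervalIntegral.integral_const_mul, intervalIntegral.integral_const_mul,
      intervalIntegral.integral_const_mul,
      integral_dotProduct_mulVec_const (hq.intervalIntegrable a b),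
      integral_const_dotProduct_mulVec (hq.intervalIntegrable a b),
      intervalIntegral.integral_const,
      smul_eq_mul, ← hL]
    ring
  have hnonneg : 0 ≤ ∫ s in a..b, (τ • q s - L) ⬝ᵥ R *ᵥ (τ • q s - L) :=
    integral_nonneg hab.le fun s _ => hR _
  rw [hint, mul_nonneg_iff_of_pos_left (sub_pos.mpr hab)] at hnonneg
  exact sub_nonneg.mp hnonneg

end QuadraticForm

theorem hasDerivAt_integral_slidingIntegral {f : ℝ → ℝ} (hf : Continuous f) (h t : ℝ) :
    HasDerivAt (fun u => ∫ θ in (-h)..0, ∫ s in (u + θ)..u, f s)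
      (h * f t - ∫ s in (t - h)..t, f s) t := by
  set F : ℝ → ℝ := fun u => ∫ s in (0 : ℝ)..u, f s
  set G : ℝ → ℝ := fun u => ∫ s in (0 : ℝ)..u, F s
  have hFd : ∀ u, HasDerivAt F (f u) u := fun u => (hf.integral_hasStrictDerivAt 0 u).hasDerivAt
  have hF : Continuous F := continuous_iff_continuousAt.mpr fun u => (hFd u).continuousAt
  have hGd : ∀ u, HasDerivAt G (F u) u := fun u => (hF.integral_hasStrictDerivAt 0 u).hasDerivAt
  have hsub : ∀ {g : ℝ → ℝ}, Continuous g → ∀ x y,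
      ∫ s in y..x, g s = (∫ s in (0 : ℝ)..x, g s) - ∫ s in (0 : ℝ)..y, g s :=
    fun hg x y => (integral_interval_sub_left (hg.intervalIntegrable _ _)
      (hg.intervalIntegrable _ _)).symm
  have hV : (fun u => ∫ θ in (-h)..0, ∫ s in (u + θ)..u, f s)
      = fun u => h * F u - (G u - G (u - h)) := by
    ext u
    have hinner : ∀ θ, ∫ s in (u + θ)..u, f s = F u - F (u + θ) := fun θ => hsub hf u (u + θ)
    simp_rw [hinner]
    rw [integral_sub intervalIntegrable_const
        ((hF.comp' (continuous_const_add u)).intervalIntegrable _ _),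
      intervalIntegral.integral_const, integral_comp_add_left F u, ← hsub hF]
    simp [sub_eq_add_neg]
  rw [hV, hsub hf]
  exact ((hFd t).const_mul h).sub ((hGd t).sub ((hGd (t - h)).comp_sub_const t h))

theorem stmt9_general {n : ℕ} (h : ℝ)
    (R : Matrix (Fin n) (Fin n) ℝ) (hRpsd : R.PosSemidef)
    (qd : ℝ → (Fin n → ℝ)) (hqd : Continuous qd)
    (T : ℝ → ℝ) (hT : ∀ t ≥ (0 : ℝ), 0 ≤ T t ∧ T t ≤ h) :
    ∀ t ≥ (0 : ℝ), ∀ D : ℝ,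
      HasDerivAt (fun u => ∫ θ in (-h)..(0 : ℝ),
        (∫ s in (u + θ)..u, (qd s) ⬝ᵥ R.mulVec (qd s))) D t →
      D ≤ h * ((qd t) ⬝ᵥ R.mulVec (qd t))
          - (1 / h) * ((∫ s in (t - T t)..t, qd s) ⬝ᵥ
              R.mulVec (∫ s in (t - T t)..t, qd s)) := by
  intro t ht D hD
  obtain ⟨hT0, hTh⟩ := hT t ht
  have hR : ∀ x, 0 ≤ x ⬝ᵥ R *ᵥ x := fun x => by simpa using hRpsd.dotProduct_mulVec_nonneg x
  have hf : Continuous fun s => qd s ⬝ᵥ R *ᵥ qd s := by fun_prop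
  rw [hD.unique (hasDerivAt_integral_slidingIntegral hf h t),
    ← integral_add_adjacent_intervals (b := t - T t) (hf.intervalIntegrable _ _)
      (hf.intervalIntegrable _ _)]
  have hJensen := dotProduct_mulVec_intervalIntegral_le hR hqd (sub_le_self t hT0)
  rw [sub_sub_cancel] at hJensen
  have hrecent : 0 ≤ ∫ s in (t - T t)..t, qd s ⬝ᵥ R *ᵥ qd s :=
    integral_nonneg (sub_le_self t hT0) fun s _ => hR _
  have hold : 0 ≤ ∫ s in (t - h)..(t - T t), qd s ⬝ᵥ R *ᵥ qd s :=
    integral_nonneg (by linarith) fun s _ => hR _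
  have hdiv := div_le_of_le_mul₀ (hT0.trans hTh) hrecent
    ((hJensen.trans (mul_le_mul_of_nonneg_right hTh hrecent)).trans_eq (mul_comm _ _))
  rw [one_div_mul_eq_div]
  linarith

/-- For V₃(t) = ∫_{−h}^0 ∫_{t+θ}^t q̇ᵀRq̇ ds dθ with 0 ≤ T(t) ≤ h and R ⪰ 0, every
derivative of V₃ at t is bounded by h q̇ᵀRq̇ − (1/h)LᵀRL, L(t) = ∫_{t−T(t)}^t q̇ ds. -/
theorem stmt9 {n : ℕ} (h : ℝ) (hh : 0 < h)
    (R : Matrix (Fin n) (Fin n) ℝ) (hRsym : R.IsSymm) (hRpsd : R.PosSemidef)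
    (qd : ℝ → (Fin n → ℝ)) (hqd : Continuous qd)
    (T : ℝ → ℝ) (hT : ∀ t ≥ (0 : ℝ), 0 ≤ T t ∧ T t ≤ h) :
    ∀ t ≥ (0 : ℝ), ∀ D : ℝ,
      HasDerivAt (fun u => ∫ θ in (-h)..(0 : ℝ),
        (∫ s in (u + θ)..u, (qd s) ⬝ᵥ R.mulVec (qd s))) D t →
      D ≤ h * ((qd t) ⬝ᵥ R.mulVec (qd t))
          - (1 / h) * ((∫ s in (t - T t)..t, qd s) ⬝ᵥ
              R.mulVec (∫ s in (t - T t)..t, qd s)) :=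
  stmt9_general h R hRpsd qd hqd T hT
end

section
/- For the 2-DOF planar manipulator inertia matrix M(q) with entries M₁₁ = l₂²m₂ + l₁²(m₁+m₂) + 2l₁l₂m₂cos(q₂), M₁₂ = M₂₁ = l₂²m₂ + l₁l₂m₂cos(q₂), M₂₂ = l₂²m₂, with m₁, m₂, l₁, l₂ > 0, M(q) is symmetric positive definite for all q. -/
open Matrix

/-- Inertia matrix of the 2-DOF planar manipulator in the simulation section. -/
noncomputable def inertia (m₁ m₂ l₁ l₂ : ℝ) (q : Fin 2 → ℝ) : Matrix (Fin 2) (Fin 2) ℝ :=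
  !![l₂ ^ 2 * m₂ + l₁ ^ 2 * (m₁ + m₂) + 2 * l₁ * l₂ * m₂ * Real.cos (q 1),
      l₂ ^ 2 * m₂ + l₁ * l₂ * m₂ * Real.cos (q 1);
    l₂ ^ 2 * m₂ + l₁ * l₂ * m₂ * Real.cos (q 1),
      l₂ ^ 2 * m₂]

namespace Matrix

variable {R : Type*}

theorem isSymm_fin_two_of (a b d : R) : (!![a, b; b, d]).IsSymm := by
  ext i j
  fin_cases i <;> fin_cases j <;> rfl

theorem posDef_fin_two_of_pos_of_det_pos [Field R] [LinearOrder R] [IsStrictOrderedRing R]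
    [StarRing R] [TrivialStar R] {a b d : R} (hd : 0 < d) (hdet : 0 < (!![a, b; b, d]).det) :
    (!![a, b; b, d]).PosDef := by
  rw [det_fin_two_of] at hdet
  refine PosDef.of_dotProduct_mulVec_pos
    (isHermitian_iff_isSymm.mpr (isSymm_fin_two_of a b d)) fun x hx => ?_
  have hquad : star x ⬝ᵥ (!![a, b; b, d] *ᵥ x) =
      ((b * x 0 + d * x 1) ^ 2 + (a * d - b * b) * x 0 ^ 2) / d := by
    simp only [star_trivial, dotProduct, mulVec, Fin.sum_univ_two, of_apply, cons_val',
      cons_val_zero, cons_val_one, empty_val', cons_val_fin_one]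
    field_simp
    ring
  rw [hquad]
  refine div_pos ?_ hd
  rcases eq_or_ne (x 0) 0 with h0 | h0
  · have h1 : x 1 ≠ 0 := fun h1 => hx (funext fun i => by fin_cases i <;> assumption)
    rw [h0, mul_zero, zero_add, zero_pow two_ne_zero, mul_zero, add_zero]
    positivity
  · positivity

end Matrix

theorem inertia_det (m₁ m₂ l₁ l₂ : ℝ) (q : Fin 2 → ℝ) :
    (inertia m₁ m₂ l₁ l₂ q).det = l₁ ^ 2 * l₂ ^ 2 * m₂ * (m₁ + m₂ * Real.sin (q 1) ^ 2) := by
  rw [inertia, det_fin_two_of, Real.sin_sq]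
  ring

/-- The 2-DOF inertia matrix is symmetric positive definite for all joint positions. -/
theorem stmt15 (m₁ m₂ l₁ l₂ : ℝ) (hm₁ : 0 < m₁) (hm₂ : 0 < m₂)
    (hl₁ : 0 < l₁) (hl₂ : 0 < l₂) (q : Fin 2 → ℝ) :
    (inertia m₁ m₂ l₁ l₂ q).IsSymm ∧ (inertia m₁ m₂ l₁ l₂ q).PosDef := by
  have hdet : 0 < (inertia m₁ m₂ l₁ l₂ q).det := by
    rw [inertia_det]
    positivity
  exact ⟨isSymm_fin_two_of _ _ _, posDef_fin_two_of_pos_of_det_pos (by positivity) hdet⟩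
end
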